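/- Let B be a totally symmetric 3-tensor on a 2-dimensional inner product space with components B_{ijk} (symmetric in all indices), and define the 1-form σ by σ_k = B_{k11} + B_{k22}. Then |σ|² ≤ (4/3)|B|², where |σ|² = σ₁² + σ₂² and |B|² = Σ_{i,j,k} B_{ijk}². -/
import Mathlib


/-- A fully symmetric 3-tensor `B` on a 2-dimensional space, with components
`B i j k` indexed by `Fin 2`, and `σ k = B k 0 0 + B k 1 1`, satisfies
`|σ|² ≤ (4/3)|B|²`. -/
theorem sigma_sq_le_four_thirds_B_sq (B : Fin 2 → Fin 2 → Fin 2 → ℝ)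
    (hsym₁ : ∀ i j k, B i j k = B j i k)
    (hsym₂ : ∀ i j k, B i j k = B i k j) :
    (B 0 0 0 + B 0 1 1) ^ 2 + (B 1 0 0 + B 1 1 1) ^ 2 ≤
      (4 / 3) * ∑ i : Fin 2, ∑ j : Fin 2, ∑ k : Fin 2, (B i j k) ^ 2 := by
  simp only [Fin.sum_univ_two]
  rw [show B 0 0 1 = B 0 1 0 from hsym₂ 0 0 1,
      show B 1 0 0 = B 0 1 0 from hsym₁ 1 0 0,
      show B 1 1 0 = B 0 1 1 from (hsym₂ 1 1 0).trans (hsym₁ 1 0 1),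
      show B 1 0 1 = B 0 1 1 from hsym₁ 1 0 1]
  nlinarith [sq_nonneg (B 0 0 0 - 3 * B 0 1 1), sq_nonneg (B 1 1 1 - 3 * B 0 1 0),
    sq_nonneg (B 0 0 0 + B 0 1 1), sq_nonneg (B 1 1 1 + B 0 1 0)]
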